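/- Let T be a desingularized operator for L with lc_∂(T) = a·g, a ∈ R, g ∈ R[x] primitive. If T ∈ M_k for some k ∈ ℕ, then cont(L) = (R[x][∂]·M_k) : a^∞, i.e., the contraction ideal equals the saturation of the left ideal generated by M_k with respect to the constant a. -/

import Mathlib

open Polynomial

noncomputable section

/-- `Q_R(x)`, the field of rational functions over the fraction field `Q_R` of `R`,
realized as the fraction field of `R[x]`. -/
abbrev QX (R : Type) [CommRing R] [IsDomain R] := FractionRing (Polynomial R)

/-- Data of an Ore algebra `R[x][∂; σ, δ] ⊆ Q_R(x)[∂; σ, δ]`.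
The ring `A` plays the role of `Q_R(x)[∂]`; `ι` embeds the coefficient field,
`D` is the Ore variable `∂`, subject to the commutation rule `∂·p = σ(p)·∂ + δ(p)`,
and every element of `A` has a unique finite coefficient expansion `Σ ι(cᵢ)·∂^i`. -/
structure OreAlg (R : Type) [CommRing R] [IsDomain R] (A : Type) [Ring A] where
  σ : Polynomial R ≃+* Polynomial R
  σ_fix : ∀ r : R, σ (C r) = C r
  δ : Polynomial R → Polynomial R
  δ_add : ∀ f g, δ (f + g) = δ f + δ g
  δ_linear : ∀ (r : R) (f), δ (C r * f) = C r * δ f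
  ι : QX R →+* A
  ι_inj : Function.Injective ι
  D : A
  comm_rule : ∀ p : Polynomial R,
    D * ι (algebraMap (Polynomial R) (QX R) p)
      = ι (algebraMap (Polynomial R) (QX R) (σ p)) * D
        + ι (algebraMap (Polynomial R) (QX R) (δ p))
  δ_leibniz : ∀ f g, δ (f * g) = σ f * δ g + δ f * g
  coeff : A → ℕ → QX R
  coeff_inj : ∀ P Q : A, (∀ i, coeff P i = coeff Q i) → P = Q
  coeff_add : ∀ P Q i, coeff (P + Q) i = coeff P i + coeff Q i
  coeff_smul : ∀ (f : QX R) (P : A) (i), coeff (ι f * P) i = f * coeff P i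
  coeff_bdd : ∀ P : A, ∃ N, ∀ i, N < i → coeff P i = 0
  coeff_mk : ∀ (N : ℕ) (c : ℕ → QX R), (∀ i, N < i → c i = 0) →
    ∀ j, coeff (∑ i ∈ Finset.range (N + 1), ι (c i) * D ^ i) j = c j

namespace OreAlg

variable {R : Type} [CommRing R] [IsDomain R] {A : Type} [Ring A] (O : OreAlg R A)

/-- The embedding of `R[x]` into the Ore algebra. -/
def ιp (f : Polynomial R) : A := O.ι (algebraMap (Polynomial R) (QX R) f)

/-- The `i`-th `∂`-coefficient of `P` lies in `R[x]`. -/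
def PolyCoeff (P : A) (i : ℕ) : Prop :=
  ∃ f : Polynomial R, O.coeff P i = algebraMap (Polynomial R) (QX R) f

/-- `P` belongs to the subring `R[x][∂]` of `Q_R(x)[∂]`. -/
def InB (P : A) : Prop := ∀ i, O.PolyCoeff P i

/-- The order (degree in `∂`) of an operator. -/
def ord (P : A) : ℕ := sSup {i | O.coeff P i ≠ 0}

/-- The leading coefficient (with respect to `∂`), in `Q_R(x)`. -/
def lc (P : A) : QX R := O.coeff P (O.ord P)

/-- The contraction ideal `cont(L) = Q_R(x)[∂]·L ∩ R[x][∂]`. -/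
def cont (L : A) : Set A := {P | O.InB P ∧ ∃ Q : A, P = Q * L}

/-- The `k`-th submodule `M_k(L) = {P ∈ cont(L) : deg_∂ P ≤ k}`. -/
def M (L : A) (k : ℕ) : Set A := {P | P ∈ O.cont L ∧ O.ord P ≤ k}

/-- The `k`-th coefficient ideal `I_k = {[∂^k]P : P ∈ M_k} ∪ {0}` (as a set of
polynomials; `0` arises from `P = 0`). -/
def Icoeff (L : A) (k : ℕ) : Set (Polynomial R) :=
  {f | ∃ P ∈ O.M L k, O.coeff P k = algebraMap (Polynomial R) (QX R) f}

end OreAlg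

/-- `gcd(p, w) = 1` in `R[x]`: every common divisor is a unit. -/
def Copr {R : Type} [CommRing R] (p w : Polynomial R) : Prop :=
  ∀ d : Polynomial R, d ∣ p → d ∣ w → IsUnit d

namespace OreAlg

variable {R : Type} [CommRing R] [IsDomain R] {A : Type} [Ring A] (O : OreAlg R A)

/-- `P` is a `p`-removing operator for `L` over `R[x]`, of order `k`:
`P·L ∈ R[x][∂]` and `σ^{-k}(lc_∂(P·L)) = (w/(v·p))·lc_∂(L)` with `gcd(p, w) = 1`. -/
def IsRemoving (L : A) (p : Polynomial R) (k : ℕ) (P : A) : Prop :=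
  O.ord P = k ∧ O.InB (P * L) ∧
  ∃ w v t l : Polynomial R, v ≠ 0 ∧ Copr p w ∧
    O.lc (P * L) = algebraMap (Polynomial R) (QX R) t ∧
    O.lc L = algebraMap (Polynomial R) (QX R) l ∧
    (⇑O.σ.symm)^[k] t * (v * p) = w * l

/-- `p` is removable from `L` (at some order). -/
def Removable (L : A) (p : Polynomial R) : Prop :=
  ∃ k P, O.IsRemoving L p k P

/-- Factorization data for `lc_∂(L) = c·p₁^{e₁}⋯p_m^{e_m}`, with `c ∈ R` and the
`pᵢ ∈ R[x] \ R` irreducible and pairwise coprime; `L` has order `r > 0`. -/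
def Factored (L : A) (r m : ℕ) (c : R) (p : Fin m → Polynomial R)
    (e : Fin m → ℕ) : Prop :=
  O.ord L = r ∧ 0 < r ∧ c ≠ 0 ∧
  O.lc L = algebraMap (Polynomial R) (QX R) (C c * ∏ i, p i ^ e i) ∧
  (∀ i, Irreducible (p i) ∧ 0 < (p i).natDegree) ∧
  (∀ i j, i ≠ j → Copr (p i) (p j))

/-- `T` is a desingularized operator for `L`: `T ∈ cont(L)` and
`σ^{r-k}(lc_∂(T)) = (a/(b·∏ pᵢ^{kᵢ}))·lc_∂(L)` with `a, b ∈ R`, where each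
`pᵢ^{dᵢ}` with `dᵢ > kᵢ` is non-removable from `L`. -/
def Desing (L : A) (r m : ℕ) (c : R) (p : Fin m → Polynomial R)
    (e : Fin m → ℕ) (T : A) : Prop :=
  T ∈ O.cont L ∧ r ≤ O.ord T ∧
  ∃ (a b : R) (k : Fin m → ℕ) (t l : Polynomial R),
    b ≠ 0 ∧ (∀ i, k i ≤ e i) ∧
    O.lc T = algebraMap (Polynomial R) (QX R) t ∧
    O.lc L = algebraMap (Polynomial R) (QX R) l ∧
    (⇑O.σ.symm)^[O.ord T - r] t * (C b * ∏ i, p i ^ k i) = C a * l ∧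
    (∀ i (d : ℕ), k i < d → ¬ O.Removable L (p i ^ d))

/-- The left ideal of `R[x][∂]` generated by a set `S ⊆ R[x][∂]`. -/
def LIdeal (S : Set A) : Set A :=
  {P | ∃ (n : ℕ) (co s : Fin n → A), (∀ i, O.InB (co i)) ∧ (∀ i, s i ∈ S) ∧
    P = ∑ i, co i * s i}

/-- The constant `a ∈ R` viewed inside the Ore algebra. -/
def cst (a : R) : A := O.ιp (C a)

/-- The saturation `I : a^∞ = {P ∈ R[x][∂] : aⁱ·P ∈ I for some i}`. -/
def sat (I : Set A) (a : R) : Set A :=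
  {P | O.InB P ∧ ∃ i : ℕ, O.cst a ^ i * P ∈ I}

end OreAlg

/-!
Since `a` is invertible in `Q_R(x)`, the inclusion `⊇` is clear. For `⊆`, let `P ∈ cont(L)` have
order `n > k` and leading coefficient `t`. Clearing denominators in `P = Q·L` and comparing
leading coefficients gives `V·σ^{-(n-r)}(t) = W·lc(L)` with `V, W` coprime, and `Q` removes every
factor of `V` from `L`; as no `pᵢ^{kᵢ+1}` is removable, `∏ pᵢ^{eᵢ-kᵢ} ∣ σ^{-(n-r)}(t)`. By Gauss's
lemma, the defining relation of `T` makes the primitive `σ^{-(ord T-r)}(g)` divide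
`∏ pᵢ^{eᵢ-kᵢ}`. Hence `σ^{n-ord T}(g) ∣ t`, so some `a·P - h·∂^{n-ord T}·T` lies in `cont(L)` and
has order `< n`, and induction on the order puts `aⁱ·P` into the left ideal generated by `M_k`.
-/

theorem Prime.pow_sub_dvd_of_pow_dvd_mul {α : Type*} [CommMonoidWithZero α] [IsCancelMulZero α]
    {p : α} (hp : Prime p) {κ e : ℕ} {x y : α} (hx : ¬p ^ (κ + 1) ∣ x) (hxy : p ^ e ∣ x * y) :
    p ^ (e - κ) ∣ y := by
  induction κ generalizing x e with
  | zero => simpa using hp.pow_dvd_of_dvd_mul_left e (by simpa using hx) hxy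
  | succ κ ih =>
    by_cases hpx : p ∣ x
    · obtain ⟨x, rfl⟩ := hpx
      obtain _ | e := e
      · simp
      have hx' : ¬p ^ (κ + 1) ∣ x := fun h => hx (by rw [pow_succ']; exact mul_dvd_mul_left p h)
      have hxy' : p ^ e ∣ x * y := by
        rwa [pow_succ', mul_assoc, mul_dvd_mul_iff_left hp.ne_zero] at hxy
      simpa using ih hx' hxy'
    · exact (pow_dvd_pow p (Nat.sub_le e _)).trans (hp.pow_dvd_of_dvd_mul_left e hpx hxy)

theorem exists_isRelPrime_mul_eq_mul {α : Type*} [CommMonoidWithZero α] [GCDMonoid α]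
    {v w x y : α} (hv : v ≠ 0) (h : v * x = w * y) :
    ∃ v' w', v' ≠ 0 ∧ IsRelPrime v' w' ∧ v' * x = w' * y := by
  obtain ⟨v', w', hv', hw', hunit⟩ := extract_gcd v w
  rw [hv'] at hv
  refine ⟨v', w', right_ne_zero_of_mul hv, gcd_isUnit_iff_isRelPrime.mp hunit, ?_⟩
  refine mul_left_cancel₀ (left_ne_zero_of_mul hv) ?_
  rw [← mul_assoc, ← mul_assoc, ← hv', ← hw', h]

theorem Polynomial.IsPrimitive.dvd_of_dvd_C_mul {R : Type*} [CommRing R] [IsDomain R]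
    [NormalizedGCDMonoid R] {g f : R[X]} {y : R} (hg : g.IsPrimitive) (hy : y ≠ 0)
    (h : g ∣ C y * f) : g ∣ f := by
  rcases eq_or_ne f 0 with rfl | hf
  · exact dvd_zero g
  have hyf : C y * f ≠ 0 := mul_ne_zero (C_ne_zero.mpr hy) hf
  calc g ∣ (C y * f).primPart := (hg.dvd_primPart_iff_dvd hyf).mpr h
    _ ∣ (C y).primPart * f.primPart := (associated_primPart_mul hyf).dvd
    _ ∣ f := (isUnit_primPart_C y).mul_left_dvd.mpr (primPart_dvd f)

theorem RingEquiv.iterate_sub_dvd_of_symm_iterate_dvd {S : Type*} [CommSemiring S] (σ : S ≃+* S)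
    {x y : S} {m n : ℕ} (hmn : m ≤ n) (h : (⇑σ.symm)^[m] x ∣ (⇑σ.symm)^[n] y) :
    (⇑σ)^[n - m] x ∣ y := by
  obtain ⟨z, hz⟩ := h
  refine ⟨(⇑σ)^[n] z, ?_⟩
  have hσ : ∀ k w, (⇑σ)^[k] ((⇑σ.symm)^[k] w) = w :=
    fun k => Function.LeftInverse.iterate (fun w => σ.apply_symm_apply w) k
  calc y = (⇑σ)^[n] ((⇑σ.symm)^[m] x * z) := by rw [← hz, hσ]
    _ = (⇑σ)^[n - m] x * (⇑σ)^[n] z := by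
      rw [iterate_map_mul, ← Nat.sub_add_cancel hmn, Function.iterate_add_apply, hσ,
        Nat.sub_add_cancel hmn]

namespace OreAlg

variable {R : Type} [CommRing R] [IsDomain R] {A : Type} [Ring A] (O : OreAlg R A)

local notation "φ" => algebraMap (Polynomial R) (QX R)

theorem algebraMap_injective : Function.Injective φ :=
  IsFractionRing.injective (Polynomial R) (QX R)

theorem cst_eq (a : R) : O.cst a = O.ι (φ (C a)) := rfl

theorem coeff_zero (i : ℕ) : O.coeff 0 i = 0 := by
  simpa using O.coeff_add 0 0 i

theorem coeff_sub (P Q : A) (i : ℕ) : O.coeff (P - Q) i = O.coeff P i - O.coeff Q i := by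
  rw [eq_sub_iff_add_eq, ← O.coeff_add, sub_add_cancel]

theorem coeff_sum {ι : Type*} (s : Finset ι) (F : ι → A) (j : ℕ) :
    O.coeff (∑ i ∈ s, F i) j = ∑ i ∈ s, O.coeff (F i) j :=
  map_sum (AddMonoidHom.mk' (O.coeff · j) fun P Q => O.coeff_add P Q j) F s

theorem eq_sum_coeff_mul_D_pow (P : A) {N : ℕ} (hN : ∀ i, N < i → O.coeff P i = 0) :
    P = ∑ i ∈ Finset.range (N + 1), O.ι (O.coeff P i) * O.D ^ i :=
  O.coeff_inj _ _ fun j => (O.coeff_mk N _ hN j).symm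

theorem coeff_mul_D_pow (f : QX R) (m j : ℕ) :
    O.coeff (O.ι f * O.D ^ m) j = if j = m then f else 0 := by
  have hsum : ∑ i ∈ Finset.range (m + 1), O.ι (if i = m then f else 0) * O.D ^ i
      = O.ι f * O.D ^ m := by
    rw [Finset.sum_range_succ, if_pos rfl, Finset.sum_eq_zero, zero_add]
    intro i hi
    rw [if_neg (Finset.mem_range.mp hi).ne, map_zero, zero_mul]
  rw [← hsum]
  exact O.coeff_mk m _ (fun i hi => if_neg hi.ne') j

theorem InB_mul_D_pow (f : Polynomial R) (m : ℕ) : O.InB (O.ι (φ f) * O.D ^ m) := fun i =>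
  ⟨if i = m then f else 0, by rw [O.coeff_mul_D_pow]; split_ifs <;> simp⟩

theorem InB_one : O.InB 1 := by
  simpa using O.InB_mul_D_pow 1 0

theorem InB_smul (f : Polynomial R) {P : A} (hP : O.InB P) : O.InB (O.ι (φ f) * P) := fun i =>
  let ⟨g, hg⟩ := hP i
  ⟨f * g, by rw [O.coeff_smul, hg, map_mul]⟩

theorem InB_sub {P Q : A} (hP : O.InB P) (hQ : O.InB Q) : O.InB (P - Q) := fun i =>
  let ⟨f, hf⟩ := hP i
  let ⟨g, hg⟩ := hQ i
  ⟨f - g, by rw [O.coeff_sub, hf, hg, map_sub]⟩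

theorem exists_InB_smul (Q : A) : ∃ v : Polynomial R, v ≠ 0 ∧ O.InB (O.ι (φ v) * Q) := by
  obtain ⟨N, hN⟩ := O.coeff_bdd Q
  obtain ⟨v, hv⟩ := IsLocalization.exist_integer_multiples (nonZeroDivisors (Polynomial R))
    (Finset.range (N + 1)) (O.coeff Q)
  refine ⟨v, nonZeroDivisors.ne_zero v.2, fun i => ?_⟩
  rcases le_or_gt i N with hi | hi
  · obtain ⟨f, hf⟩ := hv i (Finset.mem_range.mpr (Nat.lt_succ_of_le hi))
    exact ⟨f, by rw [O.coeff_smul, hf, Algebra.smul_def]⟩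
  · exact ⟨0, by rw [O.coeff_smul, hN i hi, mul_zero, map_zero]⟩

theorem bddAbove_support (P : A) : BddAbove {i | O.coeff P i ≠ 0} := by
  obtain ⟨N, hN⟩ := O.coeff_bdd P
  exact ⟨N, fun i hi => not_lt.mp fun h => hi (hN i h)⟩

theorem coeff_eq_zero_of_ord_lt (P : A) {j : ℕ} (hj : O.ord P < j) : O.coeff P j = 0 :=
  not_not.mp fun h => (le_csSup (O.bddAbove_support P) h).not_gt hj

theorem ord_le_of_coeff_eq_zero (P : A) {n : ℕ} (h : ∀ j, n < j → O.coeff P j = 0) :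
    O.ord P ≤ n := by
  rcases Set.eq_empty_or_nonempty {i | O.coeff P i ≠ 0} with he | hne
  · simp [ord, he]
  · exact csSup_le hne fun j hj => not_lt.mp fun hlt => hj (h j hlt)

theorem ord_zero : O.ord (0 : A) = 0 := by
  simp [ord, O.coeff_zero]

theorem ne_zero_of_ord_pos {P : A} (h : 0 < O.ord P) : P ≠ 0 := by
  rintro rfl
  simp [O.ord_zero] at h

theorem lc_ne_zero {P : A} (hP : P ≠ 0) : O.lc P ≠ 0 := by
  rcases Set.eq_empty_or_nonempty {i | O.coeff P i ≠ 0} with he | hne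
  · refine absurd (O.coeff_inj P 0 fun i => ?_) hP
    rw [O.coeff_zero]
    by_contra h
    exact (he ▸ h : i ∈ (∅ : Set ℕ))
  · exact Nat.sSup_mem hne (O.bddAbove_support P)

theorem ord_smul {f : QX R} (hf : f ≠ 0) (P : A) : O.ord (O.ι f * P) = O.ord P := by
  simp [ord, O.coeff_smul, hf]

theorem σ_iterate_C (m : ℕ) (r : R) : (⇑O.σ)^[m] (C r) = C r :=
  Function.iterate_fixed (O.σ_fix r) m

theorem σ_symm_iterate_C (m : ℕ) (r : R) : (⇑O.σ.symm)^[m] (C r) = C r :=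
  Function.iterate_fixed (O.σ.symm_apply_eq.mpr (O.σ_fix r).symm) m

theorem σ_iterate_ne_zero (m : ℕ) {f : Polynomial R} (hf : f ≠ 0) : (⇑O.σ)^[m] f ≠ 0 :=
  fun h => hf (O.σ.injective.iterate m (h.trans (iterate_map_zero O.σ m).symm))

theorem σ_symm_iterate_ne_zero (m : ℕ) {f : Polynomial R} (hf : f ≠ 0) :
    (⇑O.σ.symm)^[m] f ≠ 0 :=
  fun h => hf (O.σ.symm.injective.iterate m (h.trans (iterate_map_zero O.σ.symm m).symm))

theorem isPrimitive_σ_symm_iterate {g : Polynomial R} (hg : g.IsPrimitive) (m : ℕ) :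
    ((⇑O.σ.symm)^[m] g).IsPrimitive := by
  rintro r ⟨z, hz⟩
  refine hg r ⟨(⇑O.σ)^[m] z, ?_⟩
  rw [← O.σ_iterate_C m r, ← iterate_map_mul, ← hz]
  exact (Function.LeftInverse.iterate (fun w => O.σ.apply_symm_apply w) m g).symm

def TopCoeff (P : A) (n : ℕ) (f : Polynomial R) : Prop :=
  (∀ j, n < j → O.coeff P j = 0) ∧ O.coeff P n = φ f

theorem topCoeff_ord {P : A} {f : Polynomial R} (h : O.lc P = φ f) : O.TopCoeff P (O.ord P) f :=
  ⟨fun _ => O.coeff_eq_zero_of_ord_lt P, h⟩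

theorem coeff_D_mul {P : A} {n : ℕ} {g : ℕ → Polynomial R} (hg : ∀ i, O.coeff P i = φ (g i))
    (hn : ∀ j, n < j → O.coeff P j = 0) (j : ℕ) :
    O.coeff (O.D * P) j = φ (∑ i ∈ Finset.range (n + 1),
      ((if j = i + 1 then O.σ (g i) else 0) + if j = i then O.δ (g i) else 0)) := by
  rw [O.eq_sum_coeff_mul_D_pow P hn, Finset.mul_sum, O.coeff_sum, map_sum]
  refine Finset.sum_congr rfl fun i _ => ?_
  rw [hg i, ← mul_assoc, O.comm_rule, add_mul, mul_assoc, ← pow_succ', O.coeff_add,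
    O.coeff_mul_D_pow, O.coeff_mul_D_pow, map_add]
  split_ifs <;> simp

namespace TopCoeff

variable {O} {P Q : A} {n : ℕ} {f : Polynomial R}

theorem ord_eq (h : O.TopCoeff P n f) (hf : f ≠ 0) : O.ord P = n := by
  refine le_antisymm (O.ord_le_of_coeff_eq_zero P h.1)
    (le_csSup (O.bddAbove_support P) (show O.coeff P n ≠ 0 from ?_))
  rw [h.2]
  exact fun h0 => hf (algebraMap_injective (by rw [h0, map_zero]))

theorem smul (h : O.TopCoeff P n f) (g : Polynomial R) :
    O.TopCoeff (O.ι (φ g) * P) n (g * f) :=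
  ⟨fun j hj => by rw [O.coeff_smul, h.1 j hj, mul_zero], by rw [O.coeff_smul, h.2, map_mul]⟩

theorem ord_sub_lt {P' : A} (h : O.TopCoeff P n f) (h' : O.TopCoeff P' n f) (hn : 0 < n) :
    O.ord (P - P') < n := by
  refine Nat.lt_of_le_pred hn (O.ord_le_of_coeff_eq_zero _ fun j hj => ?_)
  rw [O.coeff_sub]
  rcases (Nat.le_of_pred_lt hj).eq_or_lt with rfl | hlt
  · rw [h.2, h'.2, sub_self]
  · rw [h.1 j hlt, h'.1 j hlt, sub_self]

theorem D_mul (hP : O.InB P) (h : O.TopCoeff P n f) :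
    O.InB (O.D * P) ∧ O.TopCoeff (O.D * P) (n + 1) (O.σ f) := by
  choose g hg using hP
  have hgf : g n = f := algebraMap_injective (by rw [← hg, h.2])
  have hcoeff := O.coeff_D_mul hg h.1
  refine ⟨fun j => ⟨_, hcoeff j⟩, fun j hj => ?_, ?_⟩
  · rw [hcoeff, Finset.sum_eq_zero, map_zero]
    intro i hi
    have := Finset.mem_range.mp hi
    rw [if_neg (by omega), if_neg (by omega), add_zero]
  · rw [hcoeff, Finset.sum_eq_single n]
    · simp [hgf]
    · intro i hi hin
      have := Finset.mem_range.mp hi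
      rw [if_neg (by omega), if_neg (by omega), add_zero]
    · exact fun hn => absurd (Finset.self_mem_range_succ n) hn

theorem D_pow_mul (hP : O.InB P) (h : O.TopCoeff P n f) (m : ℕ) :
    O.InB (O.D ^ m * P) ∧ O.TopCoeff (O.D ^ m * P) (n + m) ((⇑O.σ)^[m] f) := by
  induction m with
  | zero => simpa using ⟨hP, h⟩
  | succ m ih =>
    rw [pow_succ', mul_assoc, ← add_assoc, Function.iterate_succ_apply']
    exact ih.2.D_mul ih.1

theorem mul {nq : ℕ} {q : Polynomial R} (hQ : O.InB Q) (hP : O.InB P)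
    (hq : O.TopCoeff Q nq q) (hf : O.TopCoeff P n f) :
    O.TopCoeff (Q * P) (nq + n) (q * (⇑O.σ)^[nq] f) := by
  choose g hg using hQ
  have hcoeff : ∀ j, O.coeff (Q * P) j
      = ∑ i ∈ Finset.range (nq + 1), φ (g i) * O.coeff (O.D ^ i * P) j := by
    intro j
    rw [O.eq_sum_coeff_mul_D_pow Q hq.1, Finset.sum_mul, O.coeff_sum]
    exact Finset.sum_congr rfl fun i _ => by rw [hg i, mul_assoc, O.coeff_smul]
  have hDP := hf.D_pow_mul hP
  refine ⟨fun j hj => ?_, ?_⟩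
  · refine (hcoeff j).trans (Finset.sum_eq_zero fun i hi => ?_)
    rw [(hDP i).2.1 j (by have := Finset.mem_range.mp hi; omega), mul_zero]
  · rw [hcoeff, Finset.sum_eq_single nq]
    · rw [← hg, hq.2, add_comm, (hDP nq).2.2, map_mul]
    · intro i hi hinq
      rw [(hDP i).2.1 (nq + n) (by have := Finset.mem_range.mp hi; omega), mul_zero]
    · exact fun h => absurd (Finset.self_mem_range_succ nq) h

end TopCoeff

theorem InB_D_pow_mul {P : A} (hP : O.InB P) (m : ℕ) : O.InB (O.D ^ m * P) :=
  let ⟨_, hf⟩ := hP (O.ord P)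
  ((O.topCoeff_ord hf).D_pow_mul hP m).1

section LeftIdeal

variable {S : Set A}

theorem mul_mem_LIdeal {co s : A} (hco : O.InB co) (hs : s ∈ S) : co * s ∈ O.LIdeal S :=
  ⟨1, fun _ => co, fun _ => s, fun _ => hco, fun _ => hs, by rw [Fin.sum_univ_one]⟩

theorem subset_LIdeal : S ⊆ O.LIdeal S := fun s hs => by
  simpa using O.mul_mem_LIdeal O.InB_one hs

theorem add_mem_LIdeal {P₁ P₂ : A} (h₁ : P₁ ∈ O.LIdeal S) (h₂ : P₂ ∈ O.LIdeal S) :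
    P₁ + P₂ ∈ O.LIdeal S := by
  obtain ⟨n₁, co₁, s₁, hco₁, hs₁, rfl⟩ := h₁
  obtain ⟨n₂, co₂, s₂, hco₂, hs₂, rfl⟩ := h₂
  refine ⟨n₁ + n₂, Fin.append co₁ co₂, Fin.append s₁ s₂, Fin.addCases ?_ ?_, Fin.addCases ?_ ?_,
    by simp [Fin.sum_univ_add]⟩ <;> simpa

theorem sat_LIdeal_subset_cont {L : A} (hS : S ⊆ O.cont L) {a : R} (ha : a ≠ 0) :
    O.sat (O.LIdeal S) a ⊆ O.cont L := by
  rintro P ⟨hPB, i, n, co, s, -, hs, hsum⟩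
  choose Q hQ using fun j => (hS (hs j)).2
  have hfac : O.cst a ^ i * P = (∑ j, co j * Q j) * L := by
    rw [hsum, Finset.sum_mul]
    exact Finset.sum_congr rfl fun j _ => by rw [hQ j, mul_assoc]
  have hunit : (φ (C a)) ^ i ≠ 0 :=
    pow_ne_zero i fun h => ha (C_eq_zero.mp (algebraMap_injective (h.trans (map_zero φ).symm)))
  refine ⟨hPB, O.ι ((φ (C a) ^ i)⁻¹) * ∑ j, co j * Q j, ?_⟩
  rw [mul_assoc, ← hfac, cst_eq, ← map_pow O.ι, ← mul_assoc, ← map_mul, inv_mul_cancel₀ hunit,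
    map_one, one_mul]

end LeftIdeal

section Contraction

variable {L : A}

theorem smul_mem_cont (f : Polynomial R) {P : A} (hP : P ∈ O.cont L) :
    O.ι (φ f) * P ∈ O.cont L :=
  ⟨O.InB_smul f hP.1, let ⟨Q, hQ⟩ := hP.2; ⟨O.ι (φ f) * Q, by rw [hQ, mul_assoc]⟩⟩

theorem D_pow_mul_mem_cont (m : ℕ) {P : A} (hP : P ∈ O.cont L) : O.D ^ m * P ∈ O.cont L :=
  ⟨O.InB_D_pow_mul hP.1 m, let ⟨Q, hQ⟩ := hP.2; ⟨O.D ^ m * Q, by rw [hQ, mul_assoc]⟩⟩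

theorem sub_mem_cont {P P' : A} (hP : P ∈ O.cont L) (hP' : P' ∈ O.cont L) :
    P - P' ∈ O.cont L :=
  ⟨O.InB_sub hP.1 hP'.1,
    let ⟨Q, hQ⟩ := hP.2; let ⟨Q', hQ'⟩ := hP'.2; ⟨Q - Q', by rw [hQ, hQ', sub_mul]⟩⟩

end Contraction

theorem lc_smul {f : QX R} (hf : f ≠ 0) (P : A) : O.lc (O.ι f * P) = f * O.lc P := by
  rw [lc, O.ord_smul hf, O.coeff_smul, lc]

theorem exists_lc_relation {L Q : A} {l t : Polynomial R} (hLB : O.InB L) (hlcL : O.lc L = φ l)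
    (hl : l ≠ 0) (hQL : Q * L ≠ 0) (hlcQL : O.lc (Q * L) = φ t) :
    O.ord (Q * L) = O.ord Q + O.ord L ∧
      ∃ v w : Polynomial R, v ≠ 0 ∧ v * (⇑O.σ.symm)^[O.ord Q] t = w * l := by
  obtain ⟨v, hv, hvQ⟩ := O.exists_InB_smul Q
  have hφv : φ v ≠ 0 := fun h => hv (algebraMap_injective (h.trans (map_zero φ).symm))
  obtain ⟨q, hq⟩ := hvQ (O.ord (O.ι (φ v) * Q))
  have hq0 : q ≠ 0 := by
    rintro rfl
    refine mul_ne_zero hφv (O.lc_ne_zero (left_ne_zero_of_mul hQL)) ?_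
    rw [← O.lc_smul hφv, lc, hq, map_zero]
  have hprod := (O.topCoeff_ord hq).mul hvQ hLB (O.topCoeff_ord hlcL)
  rw [O.ord_smul hφv, mul_assoc] at hprod
  have hscaled := (O.topCoeff_ord hlcQL).smul v
  have hord : O.ord (Q * L) = O.ord Q + O.ord L := by
    rw [← O.ord_smul hφv]
    exact hprod.ord_eq (mul_ne_zero hq0 (O.σ_iterate_ne_zero _ hl))
  rw [hord] at hscaled
  have hvt : v * t = q * (⇑O.σ)^[O.ord Q] l := algebraMap_injective (hscaled.2.symm.trans hprod.2)
  refine ⟨hord, (⇑O.σ.symm)^[O.ord Q] v, (⇑O.σ.symm)^[O.ord Q] q,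
    O.σ_symm_iterate_ne_zero (O.ord Q) hv, ?_⟩
  rw [← iterate_map_mul, hvt, iterate_map_mul,
    Function.LeftInverse.iterate (fun w => O.σ.symm_apply_apply w)]

theorem exists_isRelPrime_lc_relation [GCDMonoid (Polynomial R)] {L P : A} {l t : Polynomial R}
    (hLB : O.InB L) (hlcL : O.lc L = φ l) (hl : l ≠ 0) (hP : P ∈ O.cont L) (hP0 : P ≠ 0)
    (hlcP : O.lc P = φ t) :
    ∃ V W : Polynomial R, IsRelPrime V W ∧
      V * (⇑O.σ.symm)^[O.ord P - O.ord L] t = W * l ∧ ∀ q, q ∣ V → O.Removable L q := by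
  obtain ⟨hPB, Q, rfl⟩ := hP
  obtain ⟨hord, v, w, hv, hvw⟩ := O.exists_lc_relation hLB hlcL hl hP0 hlcP
  obtain ⟨V, W, hV, hVW, hrel⟩ := exists_isRelPrime_mul_eq_mul hv hvw
  rw [hord, Nat.add_sub_cancel]
  refine ⟨V, W, hVW, hrel, fun q ⟨v₀, hv₀⟩ =>
    ⟨O.ord Q, Q, rfl, hPB, W, v₀, t, l, ?_, fun d hdq hdW => hVW (hdq.trans ⟨v₀, hv₀⟩) hdW,
      hlcP, hlcL, ?_⟩⟩
  · rintro rfl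
    exact hV (by rw [hv₀, mul_zero])
  · rw [← hrel, hv₀, mul_comm, mul_comm v₀]

theorem prod_pow_sub_dvd_lc [GCDMonoid (Polynomial R)] {L P : A} {l t : Polynomial R}
    (hLB : O.InB L) (hlcL : O.lc L = φ l) (hl : l ≠ 0) (hP : P ∈ O.cont L) (hP0 : P ≠ 0)
    (hlcP : O.lc P = φ t) {ι : Type*} [Fintype ι] {p : ι → Polynomial R} {e k : ι → ℕ}
    (hp : ∀ i, Prime (p i)) (hcop : Pairwise fun i j => IsRelPrime (p i) (p j))
    (hpl : ∀ i, p i ^ e i ∣ l)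
    (hnr : ∀ i, ¬O.Removable L (p i ^ (k i + 1))) :
    ∏ i, p i ^ (e i - k i) ∣ (⇑O.σ.symm)^[O.ord P - O.ord L] t := by
  obtain ⟨V, W, -, hrel, hrem⟩ := O.exists_isRelPrime_lc_relation hLB hlcL hl hP hP0 hlcP
  refine Fintype.prod_dvd_of_isRelPrime (fun i j hij => (hcop hij).pow) fun i => ?_
  exact (hp i).pow_sub_dvd_of_pow_dvd_mul (fun h => hnr i (hrem _ h)) (hrel ▸ (hpl i).mul_left W)

theorem exists_not_removable_dvd_of_desing [NormalizedGCDMonoid R] {L T : A} {r m : ℕ} {c : R}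
    {p : Fin m → Polynomial R} {e : Fin m → ℕ} (hF : O.Factored L r m c p e)
    (hT : O.Desing L r m c p e T) {a : R} (ha : a ≠ 0) {g : Polynomial R} (hg : g.IsPrimitive)
    (hlcT : O.lc T = φ (C a * g)) :
    ∃ k : Fin m → ℕ, (∀ i, ¬O.Removable L (p i ^ (k i + 1))) ∧
      (⇑O.σ.symm)^[O.ord T - r] g ∣ ∏ i, p i ^ (e i - k i) := by
  obtain ⟨-, -, -, hlcL, hirr, -⟩ := hF
  obtain ⟨-, -, a', b, k, t', l', hb, hke, hlcT', hlcL', hrel, hnr⟩ := hT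
  refine ⟨k, fun i => hnr i _ (Nat.lt_succ_self _), ?_⟩
  have hG := O.isPrimitive_σ_symm_iterate hg (O.ord T - r)
  set G := (⇑O.σ.symm)^[O.ord T - r] g
  set K := ∏ i, p i ^ k i
  set E := ∏ i, p i ^ (e i - k i)
  have hKE : ∏ i, p i ^ e i = K * E := by
    rw [← Finset.prod_mul_distrib]
    exact Finset.prod_congr rfl fun i _ => by rw [← pow_add, Nat.add_sub_cancel' (hke i)]
  have hK : K ≠ 0 := Finset.prod_ne_zero_iff.mpr fun i _ => pow_ne_zero _ (hirr i).1.ne_zero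
  have hGE : C (a * b) * G = C (a' * c) * E := by
    refine mul_right_cancel₀ hK ?_
    rw [algebraMap_injective (hlcT'.symm.trans hlcT), algebraMap_injective (hlcL'.symm.trans hlcL),
      hKE, iterate_map_mul, O.σ_symm_iterate_C] at hrel
    rw [C_mul, C_mul]
    linear_combination hrel
  have hy : a' * c ≠ 0 := by
    intro h
    rw [h, C_0, zero_mul] at hGE
    exact mul_ne_zero (C_ne_zero.mpr (mul_ne_zero ha hb)) hG.ne_zero hGE
  exact hG.dvd_of_dvd_C_mul hy (Dvd.intro_left _ hGE)

theorem cst_mul_sub_mem_cont_and_ord_lt {L T P : A} {a : R} {g h : Polynomial R}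
    (hT : T ∈ O.cont L) (hlcT : O.lc T = φ (C a * g)) (hP : P ∈ O.cont L)
    (hTP : O.ord T ≤ O.ord P) (hPpos : 0 < O.ord P)
    (hlcP : O.lc P = φ ((⇑O.σ)^[O.ord P - O.ord T] g * h)) :
    O.cst a * P - O.ι (φ h) * (O.D ^ (O.ord P - O.ord T) * T) ∈ O.cont L ∧
      O.ord (O.cst a * P - O.ι (φ h) * (O.D ^ (O.ord P - O.ord T) * T)) < O.ord P := by
  rw [cst_eq]
  refine ⟨O.sub_mem_cont (O.smul_mem_cont _ hP) (O.smul_mem_cont _ (O.D_pow_mul_mem_cont _ hT)), ?_⟩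
  have hleft := (O.topCoeff_ord hlcP).smul (C a)
  have hright := ((O.topCoeff_ord hlcT).D_pow_mul hT.1 (O.ord P - O.ord T)).2.smul h
  rw [Nat.add_sub_cancel' hTP, iterate_map_mul, O.σ_iterate_C,
    show h * (C a * (⇑O.σ)^[O.ord P - O.ord T] g) = C a * ((⇑O.σ)^[O.ord P - O.ord T] g * h)
      by ring] at hright
  exact hleft.ord_sub_lt hright hPpos

theorem exists_cst_pow_mul_mem_LIdeal {L T : A} {a : R} {g : Polynomial R} {k : ℕ}
    (hTk : T ∈ O.M L k) (hlcT : O.lc T = φ (C a * g))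
    (hdvd : ∀ P ∈ O.cont L, k < O.ord P →
      ∃ h, O.lc P = φ ((⇑O.σ)^[O.ord P - O.ord T] g * h))
    {P : A} (hP : P ∈ O.cont L) : ∃ i, O.cst a ^ i * P ∈ O.LIdeal (O.M L k) := by
  induction hn : O.ord P using Nat.strong_induction_on generalizing P with
  | _ n ih =>
    by_cases hkP : O.ord P ≤ k
    · exact ⟨0, by simpa using O.subset_LIdeal (show P ∈ O.M L k from ⟨hP, hkP⟩)⟩
    obtain ⟨h, hh⟩ := hdvd P hP (by omega)
    have hTord : O.ord T ≤ k := hTk.2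
    obtain ⟨hP', hlt⟩ :=
      O.cst_mul_sub_mem_cont_and_ord_lt hTk.1 hlcT hP (by omega) (by omega) hh
    obtain ⟨i, hi⟩ := ih _ (hn ▸ hlt) hP' rfl
    refine ⟨i + 1, ?_⟩
    have hsplit : O.cst a ^ (i + 1) * P
        = O.cst a ^ i * (O.cst a * P - O.ι (φ h) * (O.D ^ (O.ord P - O.ord T) * T))
          + O.ι (φ (C a ^ i * h)) * O.D ^ (O.ord P - O.ord T) * T := by
      have hY : O.cst a ^ i * (O.ι (φ h) * (O.D ^ (O.ord P - O.ord T) * T))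
          = O.ι (φ (C a ^ i * h)) * O.D ^ (O.ord P - O.ord T) * T := by
        rw [cst_eq, ← map_pow O.ι, ← map_pow φ, map_mul, map_mul, mul_assoc, mul_assoc]
      rw [mul_sub, ← hY, sub_add_cancel, pow_succ, mul_assoc]
    rw [hsplit]
    exact O.add_mem_LIdeal hi (O.mul_mem_LIdeal (O.InB_mul_D_pow _ _) hTk)

theorem exists_lc_eq_σ_iterate_mul_of_desing [NormalizedGCDMonoid R] {L T P : A} {r m : ℕ}
    {c : R} {p : Fin m → Polynomial R} {e : Fin m → ℕ} (hLB : O.InB L)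
    (hF : O.Factored L r m c p e) (hT : O.Desing L r m c p e T) {a : R} (ha : a ≠ 0)
    {g : Polynomial R} (hg : g.IsPrimitive) (hlcT : O.lc T = φ (C a * g))
    (hP : P ∈ O.cont L) (hTP : O.ord T ≤ O.ord P) (hP0 : P ≠ 0) :
    ∃ h, O.lc P = φ ((⇑O.σ)^[O.ord P - O.ord T] g * h) := by
  obtain ⟨k, hnr, hG⟩ := O.exists_not_removable_dvd_of_desing hF hT ha hg hlcT
  obtain ⟨hordL, hr, -, hlcL, hirr, hcop⟩ := hF
  have hl : C c * ∏ i, p i ^ e i ≠ 0 := fun h =>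
    O.lc_ne_zero (O.ne_zero_of_ord_pos (hordL ▸ hr)) (by rw [hlcL, h, map_zero])
  obtain ⟨t, ht⟩ := hP.1 (O.ord P)
  have hE := O.prod_pow_sub_dvd_lc hLB hlcL hl hP hP0 ht (fun i => (hirr i).1.prime)
    (fun i j hij => hcop i j hij)
    (fun i => (Finset.dvd_prod_of_mem _ (Finset.mem_univ i)).mul_left _) hnr
  obtain ⟨h, hh⟩ := O.σ.iterate_sub_dvd_of_symm_iterate_dvd (Nat.sub_le_sub_right hTP r)
    (hG.trans (hordL ▸ hE))
  rw [Nat.sub_sub_sub_cancel_right hT.2.1] at hh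
  exact ⟨h, ht.trans (congrArg φ hh)⟩

end OreAlg

theorem contraction_eq_saturation_general {R : Type} [CommRing R] [IsDomain R]
    [IsPrincipalIdealRing R] {A : Type} [Ring A] (O : OreAlg R A)
    (L : A) (hLB : O.InB L)
    (r m : ℕ) (c : R) (p : Fin m → Polynomial R) (e : Fin m → ℕ)
    (hF : O.Factored L r m c p e)
    (T : A) (hT : O.Desing L r m c p e T)
    (a : R) (g : Polynomial R) (hg : g.IsPrimitive)
    (hlcT : O.lc T = algebraMap (Polynomial R) (QX R) (C a * g))
    (k : ℕ) (hTk : T ∈ O.M L k) :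
    O.cont L = O.sat (O.LIdeal (O.M L k)) a := by
  let _ : StrongNormalizationMonoid R := UniqueFactorizationMonoid.strongNormalizationMonoid
  let _ := UniqueFactorizationMonoid.toNormalizedGCDMonoid R
  have hT0 : T ≠ 0 := O.ne_zero_of_ord_pos (hF.2.1.trans_le hT.2.1)
  have ha : a ≠ 0 := fun h => O.lc_ne_zero hT0 (by rw [hlcT, h, C_0, zero_mul, map_zero])
  have hdvd : ∀ P ∈ O.cont L, k < O.ord P →
      ∃ h, O.lc P = algebraMap _ _ ((⇑O.σ)^[O.ord P - O.ord T] g * h) := fun P hP hkP =>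
    O.exists_lc_eq_σ_iterate_mul_of_desing hLB hF hT ha hg hlcT hP (hTk.2.trans hkP.le)
      (O.ne_zero_of_ord_pos (Nat.zero_lt_of_lt hkP))
  exact subset_antisymm (fun P hP => ⟨hP.1, O.exists_cst_pow_mul_mem_LIdeal hTk hlcT hdvd hP⟩)
    (O.sat_LIdeal_subset_cont (fun _ h => h.1) ha)

/-- if `T` is a desingularized operator with `lc_∂(T) = a·g`
(`a ∈ R`, `g` primitive) and `T ∈ M_k`, then
`cont(L) = (R[x][∂]·M_k) : a^∞`. -/
theorem contraction_eq_saturation {R : Type} [CommRing R] [IsDomain R]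
    [IsPrincipalIdealRing R] {A : Type} [Ring A] (O : OreAlg R A)
    (L : A) (hL : L ≠ 0) (hLB : O.InB L)
    (r m : ℕ) (c : R) (p : Fin m → Polynomial R) (e : Fin m → ℕ)
    (hF : O.Factored L r m c p e)
    (T : A) (hT : O.Desing L r m c p e T)
    (a : R) (g : Polynomial R) (hg : g.IsPrimitive)
    (hlcT : O.lc T = algebraMap (Polynomial R) (QX R) (C a * g))
    (k : ℕ) (hTk : T ∈ O.M L k) :
    O.cont L = O.sat (O.LIdeal (O.M L k)) a :=
  contraction_eq_saturation_general O L hLB r m c p e hF T hT a g hg hlcT k hTk
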